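/- arXiv:2010.07175 — 2 statements merged into one kernel-verified Lean document; each statement's English description precedes it below -/
import Mathlib

section
/- Let F be a finite field, Θ ∈ Aut(F), λ ∈ F* with Θ(λ) = λ, and n a positive integer divisible by the order of Θ. A linear code C of length n over F is skew (Θ, λ)-constacyclic if and only if, under the identification of F^n with F[x;Θ]/⟨x^n - λ⟩, C is a left ideal generated by a monic polynomial g(x) that is a right divisor of x^n - λ in F[x;Θ]. -/
/-- Multiplication in the skew polynomial ring `S[x;σ]`, where polynomials are
represented as finitely supported coefficient functions `ℕ →₀ S` and
`(a x^i) (b x^j) = a σ^i(b) x^{i+j}`. -/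
noncomputable def skewMul {S : Type} [Ring S] (σ : RingAut S) (f g : ℕ →₀ S) : ℕ →₀ S :=
  f.sum fun i a => g.sum fun j b => Finsupp.single (i + j) (a * (σ ^ i) b)

/-- A code `C` of length `n` over `S` is skew `(σ, δ)`-constacyclic if it is closed
under the shift `(c₀, …, c_{n-1}) ↦ (σ(δ c_{n-1}), σ(c₀), …, σ(c_{n-2}))`. -/
def IsSkewConstacyclic {S : Type} [CommRing S] {n : ℕ} [NeZero n]
    (σ : RingAut S) (δ : S) (C : Set (Fin n → S)) : Prop :=
  ∀ c ∈ C, (fun i : Fin n => σ ((if i = 0 then δ else 1) * c (i - 1))) ∈ C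

/-- The Euclidean dual of a code, with respect to the standard bilinear form. -/
def dualSet {ι S : Type} [Fintype ι] [CommRing S] (C : Set (ι → S)) : Set (ι → S) :=
  {a | ∀ b ∈ C, ∑ t, a t * b t = 0}

/-- The polynomial (coefficient vector) associated to a codeword. -/
noncomputable def toPoly {S : Type} [Semiring S] {n : ℕ} (c : Fin n → S) : ℕ →₀ S :=
  ∑ i : Fin n, Finsupp.single (i : ℕ) (c i)

/-- A polynomial is monic: it has a coefficient equal to `1` beyond which all
coefficients vanish. -/
def IsMonicPoly {S : Type} [Semiring S] (g : ℕ →₀ S) : Prop :=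
  ∃ d, g d = 1 ∧ ∀ j, d < j → g j = 0

/-- The skew reciprocal polynomial `h*(x) = Σ_{j=0}^k Θ^j(h_{k-j}) x^j` of a
polynomial `h` of degree (at most) `k`. -/
noncomputable def skewRecip {S : Type} [Ring S] (Θ : RingAut S) (k : ℕ) (h : ℕ →₀ S) :
    ℕ →₀ S :=
  ∑ j ∈ Finset.range (k + 1), Finsupp.single j ((Θ ^ j) (h (k - j)))

/-!
Reducing coefficients by `x^m ≡ λ^{m / n} x^{m % n}` identifies `F^n` with `F[x;Θ]` modulo the
left ideal generated by `x^n - λ`; since `Θ(λ) = λ`, left multiplication by `x` becomes the skew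
constacyclic shift. Hence a constacyclic linear code pulls back to a left ideal of `F[x;Θ]`
containing `x^n - λ`, and right division by monic polynomials shows that its monic element of
least degree generates it, so in particular right-divides `x^n - λ`. Conversely, if the code is
the set of left multiples of a right divisor `g` of `x^n - λ`, then `x c(x)` and the shift of `c`
differ by a left multiple of `x^n - λ`, hence of `g`.
-/

open Finsupp Fin.NatCast

section SkewMul
variable {S : Type} [Ring S] (σ : RingAut S)

lemma skewMul_single_single (i j : ℕ) (a b : S) :
    skewMul σ (single i a) (single j b) = single (i + j) (a * (σ ^ i) b) := by
  unfold skewMul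
  rw [sum_single_index (by simp), sum_single_index (by simp)]

lemma zero_skewMul (g : ℕ →₀ S) : skewMul σ 0 g = 0 :=
  sum_zero_index

lemma skewMul_zero (f : ℕ →₀ S) : skewMul σ f 0 = 0 := by
  simp [skewMul]

lemma add_skewMul (f₁ f₂ g : ℕ →₀ S) :
    skewMul σ (f₁ + f₂) g = skewMul σ f₁ g + skewMul σ f₂ g := by
  unfold skewMul
  refine sum_add_index' (fun i => by simp) fun i a₁ a₂ => ?_
  rw [← sum_add]
  exact sum_congr fun j _ => by rw [add_mul, single_add]

lemma skewMul_add (f g₁ g₂ : ℕ →₀ S) :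
    skewMul σ f (g₁ + g₂) = skewMul σ f g₁ + skewMul σ f g₂ := by
  unfold skewMul
  rw [← sum_add]
  refine sum_congr fun i _ => sum_add_index' (fun j => by simp) fun j b₁ b₂ => ?_
  rw [map_add, mul_add, single_add]

lemma sub_skewMul (f₁ f₂ g : ℕ →₀ S) :
    skewMul σ (f₁ - f₂) g = skewMul σ f₁ g - skewMul σ f₂ g :=
  map_sub (AddMonoidHom.mk' (skewMul σ · g) (add_skewMul σ · · g)) f₁ f₂

lemma skewMul_sub (f g₁ g₂ : ℕ →₀ S) :
    skewMul σ f (g₁ - g₂) = skewMul σ f g₁ - skewMul σ f g₂ :=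
  map_sub (AddMonoidHom.mk' (skewMul σ f) (skewMul_add σ f)) g₁ g₂

lemma skewMul_assoc (f g h : ℕ →₀ S) :
    skewMul σ (skewMul σ f g) h = skewMul σ f (skewMul σ g h) := by
  induction f using induction_linear with
  | zero => simp only [zero_skewMul]
  | add f₁ f₂ h₁ h₂ => simp only [add_skewMul, h₁, h₂]
  | single i a =>
  induction g using induction_linear with
  | zero => simp only [zero_skewMul, skewMul_zero]
  | add g₁ g₂ h₁ h₂ => simp only [add_skewMul, skewMul_add, h₁, h₂]
  | single j b =>
  induction h using induction_linear with
  | zero => simp only [skewMul_zero]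
  | add h₁ h₂ ih₁ ih₂ => simp only [skewMul_add, ih₁, ih₂]
  | single k c =>
    simp only [skewMul_single_single, pow_add, RingAut.mul_apply, map_mul, add_assoc, mul_assoc]

lemma skewMul_single_apply (e : ℕ) (a : S) (g : ℕ →₀ S) (m : ℕ) :
    skewMul σ (single e a) g m = if e ≤ m then a * (σ ^ e) (g (m - e)) else 0 := by
  unfold skewMul
  rw [sum_single_index (by simp), Finsupp.sum_apply, Finsupp.sum]
  split_ifs with h
  · rw [Finset.sum_eq_single (m - e) (fun j _ hj => by rw [single_apply, if_neg (by omega)])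
      (fun hns => by simp [notMem_support_iff.mp hns]), single_apply, if_pos (by omega)]
  · exact Finset.sum_eq_zero fun j _ => by rw [single_apply, if_neg (by omega)]

lemma single_zero_skewMul (u : S) (p : ℕ →₀ S) : skewMul σ (single 0 u) p = u • p := by
  ext m
  simp [skewMul_single_apply]

end SkewMul

section Residue
variable {S : Type} [CommRing S] (σ : RingAut S) (lam : S) {n : ℕ}

lemma toPoly_add (c d : Fin n → S) : toPoly (c + d) = toPoly c + toPoly d := by
  simp [toPoly, single_add, Finset.sum_add_distrib]

lemma toPoly_piSingle (j : Fin n) (a : S) : toPoly (Pi.single j a) = single (j : ℕ) a := by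
  rw [toPoly, Finset.sum_eq_single j (fun i _ hij => by rw [Pi.single_eq_of_ne hij, single_zero])
    (by simp), Pi.single_eq_same]

lemma single_add_eq_skewMul_add (hfix : σ lam = lam) (m : ℕ) (a : S) :
    single (m + n) a =
      skewMul σ (single m a) (single n 1 - single 0 lam) + single m (lam * a) := by
  rw [skewMul_sub, skewMul_single_single, skewMul_single_single, map_one, mul_one, add_zero,
    RingAut.coe_pow, Function.iterate_fixed hfix, mul_comm, sub_add_cancel]

variable [NeZero n]

def skewShift (δ : S) (c : Fin n → S) : Fin n → S :=
  fun i => σ ((if i = 0 then δ else 1) * c (i - 1))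

variable (n) in
/-- Coordinates in `1, x, …, x^{n-1}` of the class of `p` modulo the left ideal generated by
`x^n - λ`, computed from `x^m ≡ λ^{m / n} x^{m % n}`. -/
noncomputable def residue : (ℕ →₀ S) →ₗ[S] Fin n → S :=
  linearCombination S fun m => Pi.single (m : Fin n) (lam ^ (m / n))

lemma residue_single (m : ℕ) (a : S) :
    residue lam n (single m a) = Pi.single (m : Fin n) (a * lam ^ (m / n)) := by
  rw [residue, linearCombination_single, ← Pi.single_smul', smul_eq_mul]

lemma residue_toPoly (c : Fin n → S) : residue lam n (toPoly c) = c := by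
  classical
  simp only [toPoly, map_sum, residue_single, Nat.div_eq_of_lt (Fin.is_lt _), pow_zero, mul_one,
    Fin.cast_val_eq_self, Finset.univ_sum_single]

lemma residue_X_pow_sub : residue lam n (single n 1 - single 0 lam) = 0 := by
  simp [residue_single, NeZero.pos n]

lemma residue_X_skewMul (hfix : σ lam = lam) (p : ℕ →₀ S) :
    residue lam n (skewMul σ (single 1 1) p) = skewShift σ lam (residue lam n p) := by
  induction p using induction_linear with
  | zero => ext; simp [skewShift, skewMul_zero]
  | add p q hp hq =>
    ext i
    simp only [skewMul_add, map_add, hp, hq, skewShift, Pi.add_apply, mul_add]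
  | single m a =>
    ext i
    rw [skewMul_single_single, residue_single, residue_single, skewShift, pow_one, one_mul,
      add_comm, Pi.single_apply, Pi.single_apply]
    simp only [sub_eq_iff_eq_add, Nat.cast_succ]
    split_ifs with hi hi0
    · have hdvd : n ∣ m + 1 := Fin.natCast_eq_zero.mp (by rw [Nat.cast_succ, ← hi, hi0])
      rw [Nat.succ_div, if_pos hdvd, pow_succ, map_mul, map_mul, map_pow, hfix]
      ring
    · have hndvd : ¬ n ∣ m + 1 := fun h =>
        hi0 (by rw [hi, ← Nat.cast_succ, Fin.natCast_eq_zero.mpr h])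
      rw [Nat.succ_div, if_neg hndvd, add_zero, one_mul, map_mul, map_pow, hfix]
    all_goals simp

lemma residue_single_add (m : ℕ) (a : S) :
    residue lam n (single (m + n) a) = residue lam n (single m (lam * a)) := by
  rw [residue_single, residue_single, Nat.cast_add, Fin.natCast_self, add_zero,
    Nat.add_div_right _ (NeZero.pos n), pow_succ]
  ring_nf

lemma exists_eq_toPoly_residue_add (hfix : σ lam = lam) (p : ℕ →₀ S) :
    ∃ r, p = toPoly (residue lam n p) + skewMul σ r (single n 1 - single 0 lam) := by
  induction p using induction_linear with
  | zero => exact ⟨0, by simp [toPoly, zero_skewMul]⟩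
  | add p q hp hq =>
    obtain ⟨r₁, h₁⟩ := hp
    obtain ⟨r₂, h₂⟩ := hq
    refine ⟨r₁ + r₂, ?_⟩
    rw [map_add, toPoly_add, add_skewMul]
    nth_rw 1 [h₁, h₂]
    abel
  | single m a =>
    induction m using Nat.strong_induction_on generalizing a with
    | _ m ih =>
    by_cases hm : m < n
    · refine ⟨0, ?_⟩
      rw [residue_single, toPoly_piSingle, Fin.val_natCast, Nat.mod_eq_of_lt hm,
        Nat.div_eq_of_lt hm, pow_zero, mul_one, zero_skewMul, add_zero]
    · obtain ⟨m, rfl⟩ : ∃ k, m = k + n := ⟨m - n, by omega⟩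
      obtain ⟨r, hr⟩ := ih m (by have := NeZero.pos n; omega) (lam * a)
      refine ⟨single m a + r, ?_⟩
      rw [residue_single_add, add_skewMul]
      nth_rw 1 [single_add_eq_skewMul_add σ lam hfix, hr]
      abel

end Residue

section Division
variable {S : Type} [Ring S] (σ : RingAut S)

lemma exists_eq_skewMul_add_of_monic {g : ℕ →₀ S} {d : ℕ} (hgd : g d = 1)
    (hgtop : ∀ j, d < j → g j = 0) (p : ℕ →₀ S) :
    ∃ q r, p = skewMul σ q g + r ∧ ∀ j, d ≤ j → r j = 0 := by
  suffices ∀ N, ∀ p : ℕ →₀ S, (∀ j, N ≤ j → p j = 0) →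
      ∃ q r, p = skewMul σ q g + r ∧ ∀ j, d ≤ j → r j = 0 from
    this (p.support.sup id + 1) p fun j hj => notMem_support_iff.mp fun hmem => by
      have := Finset.le_sup (f := id) hmem; simp only [id] at this; omega
  intro N
  induction N with
  | zero =>
    refine fun p hp => ⟨0, 0, ?_, fun _ _ => rfl⟩
    rw [zero_skewMul, add_zero]
    ext j
    exact hp j j.zero_le
  | succ N ih =>
    intro p hp
    by_cases hN : N < d
    · exact ⟨0, p, by rw [zero_skewMul, zero_add], fun j hj => hp j (by omega)⟩
    -- cancel the coefficient of `x^N` against the leading term of `x^{N-d} g`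
    set t := single (N - d) (p N)
    have hlow : ∀ j, N ≤ j → (p - skewMul σ t g) j = 0 := by
      intro j hj
      rw [Finsupp.sub_apply, skewMul_single_apply, if_pos (by omega)]
      rcases hj.eq_or_lt with rfl | hlt
      · rw [Nat.sub_sub_self (by omega), hgd, map_one, mul_one, sub_self]
      · rw [hp j hlt, hgtop _ (by omega), map_zero, mul_zero, sub_zero]
    obtain ⟨q, r, hqr, hr⟩ := ih _ hlow
    exact ⟨q + t, r, by rw [add_skewMul, add_right_comm, ← hqr, sub_add_cancel], hr⟩

end Division

lemma exists_monic_generator {S : Type} [DivisionRing S] (σ : RingAut S)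
    (I : AddSubgroup (ℕ →₀ S)) (hI : ∀ q p, p ∈ I → skewMul σ q p ∈ I)
    (hmonic : ∃ g ∈ I, IsMonicPoly g) :
    ∃ g ∈ I, IsMonicPoly g ∧ ∀ p ∈ I, ∃ q, p = skewMul σ q g := by
  classical
  have hex : ∃ d, ∃ g ∈ I, g d = 1 ∧ ∀ j, d < j → g j = 0 := by
    obtain ⟨g, hgI, d, hg⟩ := hmonic
    exact ⟨d, g, hgI, hg⟩
  obtain ⟨g, hgI, hgd, hgtop⟩ := Nat.find_spec hex
  refine ⟨g, hgI, ⟨_, hgd, hgtop⟩, fun p hp => ?_⟩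
  obtain ⟨q, r, hqr, hr⟩ := exists_eq_skewMul_add_of_monic σ hgd hgtop p
  suffices r = 0 by exact ⟨q, by rw [hqr, this, add_zero]⟩
  have hrI : r ∈ I := by
    rw [eq_sub_of_add_eq' hqr.symm]
    exact I.sub_mem hp (hI q g hgI)
  by_contra hr0
  -- normalising the leading coefficient of `r` gives a monic element of `I` of smaller degree
  have hsupp : r.support.Nonempty := support_nonempty_iff.mpr hr0
  set e := r.support.max' hsupp
  have hre : r e ≠ 0 := mem_support_iff.mp (r.support.max'_mem hsupp)
  have hrtop : ∀ j, e < j → r j = 0 := fun j hj =>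
    notMem_support_iff.mp fun hmem => (r.support.le_max' j hmem).not_gt hj
  have hed : e < Nat.find hex := by_contra fun h => hre (hr e (not_lt.mp h))
  refine Nat.find_min hex hed
    ⟨skewMul σ (single 0 (r e)⁻¹) r, hI _ _ hrI, ?_, fun j hj => ?_⟩
  · rw [single_zero_skewMul, Finsupp.smul_apply, smul_eq_mul, inv_mul_cancel₀ hre]
  · rw [single_zero_skewMul, Finsupp.smul_apply, hrtop j hj, smul_zero]

section Constacyclic
variable {S : Type} [CommRing S] (σ : RingAut S) (lam : S) {n : ℕ} [NeZero n]

lemma residue_skewMul_mem (hfix : σ lam = lam) {C : Submodule S (Fin n → S)}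
    (hC : IsSkewConstacyclic σ lam (C : Set (Fin n → S))) (q : ℕ →₀ S) {p : ℕ →₀ S}
    (hp : residue lam n p ∈ C) : residue lam n (skewMul σ q p) ∈ C := by
  induction q using induction_linear with
  | zero => rw [zero_skewMul, map_zero]; exact C.zero_mem
  | add q₁ q₂ h₁ h₂ => rw [add_skewMul, map_add]; exact C.add_mem h₁ h₂
  | single e c =>
    induction e generalizing c p with
    | zero => rw [single_zero_skewMul, map_smul]; exact C.smul_mem c hp
    | succ e ih =>
      have hX : single (e + 1) c = skewMul σ (single e c) (single 1 1) := by
        rw [skewMul_single_single, map_one, mul_one]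
      rw [hX, skewMul_assoc]
      refine ih (p := skewMul σ (single 1 1) p) ?_ c
      rw [residue_X_skewMul σ lam hfix]
      exact hC _ hp

end Constacyclic

theorem stmt11_general (F : Type) [Field F] (n : ℕ) [NeZero n]
    (Θ : RingAut F) (lam : F) (hfix : Θ lam = lam)
    (C : Submodule F (Fin n → F)) :
    IsSkewConstacyclic Θ lam (C : Set (Fin n → F)) ↔
      ∃ g : ℕ →₀ F, IsMonicPoly g ∧
        (∃ h, skewMul Θ h g = Finsupp.single n 1 - Finsupp.single 0 lam) ∧
        (∀ c : Fin n → F, c ∈ C ↔ ∃ q, toPoly c = skewMul Θ q g) := by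
  constructor
  · intro hC
    let I := C.toAddSubgroup.comap (residue lam n).toAddMonoidHom
    have hI : ∀ q p, p ∈ I → skewMul Θ q p ∈ I := fun q _ hp =>
      residue_skewMul_mem Θ lam hfix hC q hp
    have hmod : single n 1 - single 0 lam ∈ I := by
      simp [I, residue_X_pow_sub]
    have hmonic : IsMonicPoly (single n (1 : F) - single 0 lam) :=
      ⟨n, by simp [NeZero.ne n], fun j hj => by
        simp [hj.ne', (hj.trans' (NeZero.pos n)).ne']⟩
    obtain ⟨g, hgI, hg, hgen⟩ := exists_monic_generator Θ I hI ⟨_, hmod, hmonic⟩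
    refine ⟨g, hg, ?_, fun c => ⟨fun hc => hgen _ ?_, fun ⟨q, hq⟩ => ?_⟩⟩
    · obtain ⟨h, hh⟩ := hgen _ hmod
      exact ⟨h, hh.symm⟩
    · simpa [I, residue_toPoly] using hc
    · simpa [I, ← hq, residue_toPoly] using hI q g hgI
  · rintro ⟨g, -, ⟨h, hh⟩, hchar⟩ c hc
    obtain ⟨q, hq⟩ := (hchar c).mp hc
    obtain ⟨r, hr⟩ :=
      exists_eq_toPoly_residue_add Θ lam (n := n) hfix (skewMul Θ (single 1 1) (toPoly c))
    rw [residue_X_skewMul Θ lam hfix, residue_toPoly] at hr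
    refine (hchar _).mpr ⟨skewMul Θ (single 1 1) q - skewMul Θ r h, ?_⟩
    rw [sub_skewMul, skewMul_assoc, skewMul_assoc, hh, ← hq]
    exact eq_sub_of_add_eq hr.symm

theorem stmt11 (F : Type) [Field F] [Fintype F] (n : ℕ) [NeZero n]
    (Θ : RingAut F) (lam : F) (hlam : lam ≠ 0) (hfix : Θ lam = lam)
    (hord : orderOf Θ ∣ n) (C : Submodule F (Fin n → F)) :
    IsSkewConstacyclic Θ lam (C : Set (Fin n → F)) ↔
      ∃ g : ℕ →₀ F, IsMonicPoly g ∧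
        (∃ h, skewMul Θ h g = Finsupp.single n 1 - Finsupp.single 0 lam) ∧
        (∀ c : Fin n → F, c ∈ C ↔ ∃ q, toPoly c = skewMul Θ q g) :=
  stmt11_general F n Θ lam hfix C
end

section
/- Let C = η₀A₀ ⊕ η₁A₁ ⊕ η₂A₂ be a skew (σ, δ)-constacyclic code of length n over R = F_{p^m}[v]/⟨v^3 - v⟩, where A_i is generated by the monic right divisor f_i(x) of x^n - λ_i in F_{p^m}[x;Θ]. Then C is generated as a left module by f(x) = η₀f₀(x) + η₁f₁(x) + η₂f₂(x), and f(x) is a right divisor of x^n - δ in R[x;σ]. -/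
open Polynomial

set_option synthInstance.maxHeartbeats 1000000
set_option maxHeartbeats 1000000

noncomputable section

/-- The ring `R = F[v]/⟨v^3 - v⟩`. -/
abbrev Rq (F : Type) [Field F] : Type :=
  Polynomial F ⧸ Ideal.span {(X : Polynomial F) ^ 3 - X}

/-- The image of `v` in `R`. -/
def vR (F : Type) [Field F] : Rq F := Ideal.Quotient.mk _ X

/-- The orthogonal idempotents `η₀ = 1 - v²`, `η₁ = ζ(v² + v)`, `η₂ = ζ(v² - v)`
with `ζ = 2⁻¹`. -/
def eta (F : Type) [Field F] : Fin 3 → Rq F :=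
  ![1 - vR F ^ 2,
    algebraMap F (Rq F) (2 : F)⁻¹ * (vR F ^ 2 + vR F),
    algebraMap F (Rq F) (2 : F)⁻¹ * (vR F ^ 2 - vR F)]

/-- Coefficientwise embedding of polynomials over `F` into polynomials over `R`. -/
def liftPoly (F : Type) [Field F] (g : ℕ →₀ F) : ℕ →₀ Rq F :=
  Finsupp.mapRange (algebraMap F (Rq F)) (map_zero _) g

/-!
Since `v³ = v` and `2` is invertible, evaluation at `v = 0, 1, -1` identifies `R` with
`F × F × F`, the idempotent `ηᵢ` cutting out the `i`-th factor. The automorphism `σ` fixes `v`,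
hence every `ηᵢ`, and acts as `Θ` on each factor, so `R[x;σ]` splits as three copies of
`F[x;Θ]`: `(Σ ηᵢ qᵢ)(Σ ηᵢ fᵢ) = Σ ηᵢ qᵢ fᵢ`. Both claims are then checked factor by factor: a
codeword `Σ ηᵢ qᵢ fᵢ` of `C` is the left multiple `(Σ ηᵢ qᵢ) f`, the `i`-th factor of a left
multiple of `f` is a left multiple of `fᵢ`, and `(Σ ηᵢ hᵢ) f = Σ ηᵢ (xⁿ - λᵢ) = xⁿ - δ`
whenever `hᵢ fᵢ = xⁿ - λᵢ`.
-/

section SkewPolynomial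

variable {S : Type}

lemma skewMul_add_left [Ring S] (σ : RingAut S) (f f' g : ℕ →₀ S) :
    skewMul σ (f + f') g = skewMul σ f g + skewMul σ f' g := by
  unfold skewMul
  rw [Finsupp.sum_add_index' (fun i => by simp)]
  intro i a a'
  rw [← Finsupp.sum_add]
  exact Finsupp.sum_congr fun j _ => by rw [add_mul, Finsupp.single_add]

lemma skewMul_add_right [Ring S] (σ : RingAut S) (f g g' : ℕ →₀ S) :
    skewMul σ f (g + g') = skewMul σ f g + skewMul σ f g' := by
  unfold skewMul
  rw [← Finsupp.sum_add]
  refine Finsupp.sum_congr fun i _ => ?_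
  rw [Finsupp.sum_add_index' (fun j => by simp)]
  intro j b b'
  rw [map_add, mul_add, Finsupp.single_add]

lemma skewMul_sum_left [Ring S] (σ : RingAut S) {ι : Type} (s : Finset ι) (f : ι → ℕ →₀ S)
    (g : ℕ →₀ S) : skewMul σ (∑ i ∈ s, f i) g = ∑ i ∈ s, skewMul σ (f i) g :=
  map_sum (AddMonoidHom.mk' (skewMul σ · g) fun f f' => skewMul_add_left σ f f' g) f s

lemma skewMul_sum_right [Ring S] (σ : RingAut S) {ι : Type} (s : Finset ι) (f : ℕ →₀ S)
    (g : ι → ℕ →₀ S) : skewMul σ f (∑ i ∈ s, g i) = ∑ i ∈ s, skewMul σ f (g i) :=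
  map_sum (AddMonoidHom.mk' (skewMul σ f) (skewMul_add_right σ f)) g s

lemma skewMul_smul_left [CommRing S] (σ : RingAut S) (r : S) (f g : ℕ →₀ S) :
    skewMul σ (r • f) g = r • skewMul σ f g := by
  unfold skewMul
  rw [Finsupp.sum_smul_index' (fun i => by simp), Finsupp.smul_sum]
  refine Finsupp.sum_congr fun i _ => ?_
  rw [Finsupp.smul_sum]
  refine Finsupp.sum_congr fun j _ => ?_
  rw [Finsupp.smul_single, smul_eq_mul, smul_eq_mul, mul_assoc]

lemma skewMul_smul_right [CommRing S] (σ : RingAut S) {r : S} (hr : σ r = r) (f g : ℕ →₀ S) :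
    skewMul σ f (r • g) = r • skewMul σ f g := by
  unfold skewMul
  rw [Finsupp.smul_sum]
  refine Finsupp.sum_congr fun i _ => ?_
  rw [Finsupp.sum_smul_index' (fun j => by simp), Finsupp.smul_sum]
  refine Finsupp.sum_congr fun j _ => ?_
  rw [Finsupp.smul_single, smul_eq_mul, smul_eq_mul, map_mul, RingAut.coe_pow,
    Function.iterate_fixed hr, mul_left_comm]

lemma skewMul_mapRange {T G : Type} [Ring S] [Ring T] [FunLike G S T] [RingHomClass G S T]
    (φ : G) (σ : RingAut S) (τ : RingAut T) (hφ : ∀ s, φ (σ s) = τ (φ s)) (f g : ℕ →₀ S) :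
    Finsupp.mapRange φ (map_zero φ) (skewMul σ f g) =
      skewMul τ (Finsupp.mapRange φ (map_zero φ) f) (Finsupp.mapRange φ (map_zero φ) g) := by
  have hφ_pow : ∀ (i : ℕ) (s : S), φ ((σ ^ i) s) = (τ ^ i) (φ s) := fun i s => by
    simpa only [RingAut.coe_pow] using Function.Semiconj.iterate_right hφ i s
  unfold skewMul
  rw [Finsupp.sum_mapRange_index (fun i => by simp), Finsupp.sum, Finsupp.sum,
    Finsupp.mapRange_finsetSum]
  refine Finset.sum_congr rfl fun i _ => ?_
  rw [Finsupp.sum_mapRange_index (fun j => by simp), Finsupp.sum, Finsupp.sum,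
    Finsupp.mapRange_finsetSum]
  refine Finset.sum_congr rfl fun j _ => ?_
  rw [Finsupp.mapRange_single, map_mul, hφ_pow]

lemma skewMul_sum_smul_sum_smul [CommRing S] (σ : RingAut S) {ι : Type} [Fintype ι]
    [DecidableEq ι] {e : ι → S} (he : OrthogonalIdempotents e) (hσe : ∀ i, σ (e i) = e i)
    (g h : ι → ℕ →₀ S) :
    skewMul σ (∑ i, e i • g i) (∑ j, e j • h j) = ∑ i, e i • skewMul σ (g i) (h i) := by
  simp only [skewMul_sum_left, skewMul_sum_right, skewMul_smul_left,
    skewMul_smul_right σ (hσe _), Finset.smul_sum, smul_smul, he.mul_eq, ite_smul, zero_smul,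
    Finset.sum_ite_eq, Finset.mem_univ, if_true]

lemma toPoly_sum [Semiring S] {n : ℕ} {ι : Type} (s : Finset ι) (c : ι → Fin n → S) :
    toPoly (fun t => ∑ j ∈ s, c j t) = ∑ j ∈ s, toPoly (c j) := by
  unfold toPoly
  simp only [Finsupp.single_finsetSum]
  exact Finset.sum_comm

lemma toPoly_mul_left [Semiring S] {n : ℕ} (r : S) (c : Fin n → S) :
    toPoly (fun t => r * c t) = r • toPoly c := by
  simp only [toPoly, Finset.smul_sum, Finsupp.smul_single, smul_eq_mul]

lemma mapRange_toPoly {T G : Type} [Semiring S] [Semiring T] [FunLike G S T]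
    [AddMonoidHomClass G S T] (φ : G) {n : ℕ}
    (c : Fin n → S) :
    Finsupp.mapRange φ (map_zero φ) (toPoly c) = toPoly (fun t => φ (c t)) := by
  simp only [toPoly, Finsupp.mapRange_finsetSum, Finsupp.mapRange_single]

end SkewPolynomial

section QuotientRing

variable (F : Type) [Field F]

lemma vR_pow_three : vR F ^ 3 = vR F := by
  rw [vR, ← map_pow, Ideal.Quotient.mk_eq_mk_iff_sub_mem]
  exact Ideal.subset_span rfl

def vRoot : Fin 3 → F := ![0, 1, -1]

def evalRq (i : Fin 3) : Rq F →ₐ[F] F :=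
  Ideal.Quotient.liftₐ _ (aeval (vRoot F i)) fun g hg => by
    obtain ⟨c, rfl⟩ := Ideal.mem_span_singleton'.mp hg
    fin_cases i <;> norm_num [vRoot]

lemma evalRq_mk (i : Fin 3) (g : F[X]) :
    evalRq F i (Ideal.Quotient.mk _ g) = g.eval (vRoot F i) := by
  simp [evalRq]

lemma evalRq_vR (i : Fin 3) : evalRq F i (vR F) = vRoot F i := by
  rw [vR, evalRq_mk, eval_X]

variable {F}

lemma evalRq_eta (h2 : (2 : F) ≠ 0) (i j : Fin 3) :
    evalRq F i (eta F j) = if i = j then 1 else 0 := by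
  fin_cases i <;> fin_cases j <;>
    simp [_root_.eta, evalRq_vR, vRoot] <;> field_simp <;> norm_num

lemma eta_mul_vR_sub (i : Fin 3) :
    eta F i * (vR F - algebraMap F (Rq F) (vRoot F i)) = 0 := by
  have hv := vR_pow_three F
  fin_cases i <;>
    simp only [_root_.eta, vRoot, Fin.zero_eta, Fin.mk_one, Fin.reduceFinMk, Matrix.cons_val,
      map_zero, map_one, map_neg, sub_zero, sub_neg_eq_add]
  · linear_combination -hv
  · linear_combination algebraMap F (Rq F) 2⁻¹ * hv
  · linear_combination algebraMap F (Rq F) 2⁻¹ * hv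

lemma eta_mul_eq_eta_mul_algebraMap (i : Fin 3) (r : Rq F) :
    eta F i * r = eta F i * algebraMap F (Rq F) (evalRq F i r) := by
  obtain ⟨g, rfl⟩ := Ideal.Quotient.mk_surjective r
  obtain ⟨q, hq⟩ := X_sub_C_dvd_sub_C_eval (a := vRoot F i) (p := g)
  have hmk := congrArg (Ideal.Quotient.mk (Ideal.span {(X : F[X]) ^ 3 - X})) hq
  simp only [map_sub, map_mul, ← vR.eq_1, ← Polynomial.algebraMap_eq,
    Ideal.Quotient.mk_algebraMap] at hmk
  rw [← sub_eq_zero, ← mul_sub, evalRq_mk, hmk, ← mul_assoc, eta_mul_vR_sub, zero_mul]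

lemma completeOrthogonalIdempotents_eta (h2 : (2 : F) ≠ 0) :
    CompleteOrthogonalIdempotents (eta F) where
  idem i := by
    rw [IsIdempotentElem, eta_mul_eq_eta_mul_algebraMap, evalRq_eta h2, if_pos rfl, map_one,
      mul_one]
  ortho i j hij := by
    dsimp only
    rw [eta_mul_eq_eta_mul_algebraMap, evalRq_eta h2, if_neg hij, map_zero, mul_zero]
  complete := by
    have h2' : algebraMap F (Rq F) 2⁻¹ * 2 = 1 := by
      rw [← map_ofNat (algebraMap F (Rq F)), ← map_mul, inv_mul_cancel₀ h2, map_one]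
    simp only [Fin.sum_univ_three, _root_.eta, Matrix.cons_val]
    linear_combination vR F ^ 2 * h2'

lemma eq_sum_eta_mul_algebraMap (h2 : (2 : F) ≠ 0) (r : Rq F) :
    r = ∑ i, eta F i * algebraMap F (Rq F) (evalRq F i r) := by
  simp only [← eta_mul_eq_eta_mul_algebraMap, ← Finset.sum_mul,
    (completeOrthogonalIdempotents_eta h2).complete, one_mul]

lemma mapRange_evalRq_sum_eta_smul_liftPoly (h2 : (2 : F) ≠ 0) (g : Fin 3 → ℕ →₀ F)
    (i : Fin 3) :
    Finsupp.mapRange (evalRq F i) (map_zero _) (∑ j, eta F j • liftPoly F (g j)) = g i := by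
  ext k
  simp [Finsupp.finsetSum_apply, liftPoly, evalRq_eta h2]

lemma toPoly_sum_eta_mul_algebraMap {n : ℕ} (y : Fin 3 → Fin n → F) :
    toPoly (fun t => ∑ j, eta F j * algebraMap F (Rq F) (y j t)) =
      ∑ j, eta F j • liftPoly F (toPoly (y j)) := by
  simp only [toPoly_sum, toPoly_mul_left, liftPoly, mapRange_toPoly]

lemma sum_eta_smul_liftPoly_single_sub_single (h2 : (2 : F) ≠ 0) (n : ℕ) (lam : Fin 3 → F) :
    ∑ i, eta F i • liftPoly F (Finsupp.single n 1 - Finsupp.single 0 (lam i)) =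
      Finsupp.single n 1 - Finsupp.single 0 (∑ i, algebraMap F (Rq F) (lam i) * eta F i) := by
  simp only [liftPoly, Finsupp.mapRange_sub (map_sub (algebraMap F (Rq F))),
    Finsupp.mapRange_single, map_one, smul_sub, Finsupp.smul_single, smul_eq_mul, mul_one,
    Finset.sum_sub_distrib, ← Finsupp.single_finsetSum,
    (completeOrthogonalIdempotents_eta h2).complete, mul_comm]

end QuotientRing

section Automorphism

variable {F : Type} [Field F] {Θ : RingAut F} {σ : RingAut (Rq F)}
  (hσa : ∀ a, σ (algebraMap F (Rq F) a) = algebraMap F (Rq F) (Θ a)) (hσv : σ (vR F) = vR F)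

include hσa in
lemma liftPoly_skewMul (q g : ℕ →₀ F) :
    liftPoly F (skewMul Θ q g) = skewMul σ (liftPoly F q) (liftPoly F g) :=
  skewMul_mapRange _ Θ σ (fun a => (hσa a).symm) q g

include hσa hσv

lemma sigma_eta (i : Fin 3) : σ (eta F i) = eta F i := by
  have h2inv : Θ (2 : F)⁻¹ = (2 : F)⁻¹ := by rw [map_inv₀, map_ofNat]
  fin_cases i <;>
    simp only [_root_.eta, Fin.zero_eta, Fin.mk_one, Fin.reduceFinMk, Matrix.cons_val,
      map_sub, map_add, map_mul, map_one, map_pow, hσv, hσa, h2inv]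

lemma evalRq_sigma (i : Fin 3) (r : Rq F) : evalRq F i (σ r) = Θ (evalRq F i r) := by
  obtain ⟨g, rfl⟩ := Ideal.Quotient.mk_surjective r
  suffices ((evalRq F i : Rq F →+* F).comp (σ : Rq F →+* Rq F)).comp (Ideal.Quotient.mk _) =
      ((Θ : F →+* F).comp (evalRq F i : Rq F →+* F)).comp (Ideal.Quotient.mk _) from
    RingHom.congr_fun this g
  refine Polynomial.ringHom_ext (fun a => ?_) ?_
  · change evalRq F i (σ (algebraMap F (Rq F) a)) = Θ (evalRq F i (algebraMap F (Rq F) a))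
    simp [hσa]
  · change evalRq F i (σ (vR F)) = Θ (evalRq F i (vR F))
    fin_cases i <;> simp [hσv, evalRq_vR, vRoot]

lemma skewMul_sum_eta_smul_liftPoly (h2 : (2 : F) ≠ 0) (q g : Fin 3 → ℕ →₀ F) :
    skewMul σ (∑ i, eta F i • liftPoly F (q i)) (∑ i, eta F i • liftPoly F (g i)) =
      ∑ i, eta F i • liftPoly F (skewMul Θ (q i) (g i)) := by
  simp only [liftPoly_skewMul hσa]
  exact skewMul_sum_smul_sum_smul σ (completeOrthogonalIdempotents_eta h2).toOrthogonalIdempotents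
    (sigma_eta hσa hσv) _ _

end Automorphism

theorem stmt12_general (p m n : ℕ) (hodd : Odd p) [NeZero n]
    (F : Type) [Field F] [Fintype F] (hF : Fintype.card F = p ^ m)
    (Θ : RingAut F) (σ : RingAut (Rq F))
    (hσ : ∀ a b c : F,
      σ (algebraMap F (Rq F) a + algebraMap F (Rq F) b * vR F +
          algebraMap F (Rq F) c * vR F ^ 2) =
        algebraMap F (Rq F) (Θ a) + algebraMap F (Rq F) (Θ b) * vR F +
          algebraMap F (Rq F) (Θ c) * vR F ^ 2)
    (lam : Fin 3 → F) (δ : Rq F)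
    (hδ : δ = ∑ i, algebraMap F (Rq F) (lam i) * eta F i)
    (f : Fin 3 → (ℕ →₀ F))
    (hdiv : ∀ i, ∃ h, skewMul Θ h (f i) =
        Finsupp.single n 1 - Finsupp.single 0 (lam i))
    (A : Fin 3 → Submodule F (Fin n → F))
    (hA : ∀ i, ∀ c : Fin n → F, c ∈ A i ↔ ∃ q, toPoly c = skewMul Θ q (f i))
    (C : Submodule (Rq F) (Fin n → Rq F))
    (hC : ∀ c, c ∈ C ↔ ∃ y : Fin 3 → Fin n → F, (∀ i, y i ∈ A i) ∧
        c = fun t => ∑ j, eta F j * algebraMap F (Rq F) (y j t)) :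
    (∀ c : Fin n → Rq F, c ∈ C ↔
        ∃ q : ℕ →₀ Rq F, toPoly c = skewMul σ q (∑ i, eta F i • liftPoly F (f i))) ∧
      ∃ h : ℕ →₀ Rq F, skewMul σ h (∑ i, eta F i • liftPoly F (f i)) =
        Finsupp.single n 1 - Finsupp.single 0 δ := by
  have h2 : (2 : F) ≠ 0 := Ring.two_ne_zero fun hchar => by
    have := FiniteField.even_card_iff_char_two.mp hchar
    rw [hF, ← Nat.even_iff] at this
    exact Nat.not_even_iff_odd.mpr hodd.pow this
  have hσa : ∀ a, σ (algebraMap F (Rq F) a) = algebraMap F (Rq F) (Θ a) := fun a => by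
    simpa using hσ a 0 0
  have hσv : σ (vR F) = vR F := by simpa using hσ 0 1 0
  refine ⟨fun c => ⟨fun hc => ?_, fun ⟨Q, hQ⟩ => ?_⟩, ?_⟩
  · obtain ⟨y, hy, rfl⟩ := (hC c).mp hc
    choose q hq using fun j => (hA j (y j)).mp (hy j)
    refine ⟨∑ j, eta F j • liftPoly F (q j), ?_⟩
    rw [skewMul_sum_eta_smul_liftPoly hσa hσv h2, toPoly_sum_eta_mul_algebraMap]
    simp only [hq]
  · refine (hC c).mpr ⟨fun i t => evalRq F i (c t), fun i => (hA i _).mpr ?_,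
      funext fun t => eq_sum_eta_mul_algebraMap h2 (c t)⟩
    refine ⟨Finsupp.mapRange (evalRq F i) (map_zero _) Q, ?_⟩
    have hQi := congrArg (Finsupp.mapRange (evalRq F i) (map_zero _)) hQ
    rwa [mapRange_toPoly, skewMul_mapRange _ σ Θ (evalRq_sigma hσa hσv i),
      mapRange_evalRq_sum_eta_smul_liftPoly h2] at hQi
  · choose h hh using hdiv
    refine ⟨∑ i, eta F i • liftPoly F (h i), ?_⟩
    rw [skewMul_sum_eta_smul_liftPoly hσa hσv h2]
    simp only [hh]
    rw [sum_eta_smul_liftPoly_single_sub_single h2, hδ]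

theorem stmt12 (p m n : ℕ) (hp : p.Prime) (hodd : Odd p) (hm : 0 < m) [NeZero n]
    (F : Type) [Field F] [Fintype F] (hF : Fintype.card F = p ^ m)
    (Θ : RingAut F) (σ : RingAut (Rq F))
    (hσ : ∀ a b c : F,
      σ (algebraMap F (Rq F) a + algebraMap F (Rq F) b * vR F +
          algebraMap F (Rq F) c * vR F ^ 2) =
        algebraMap F (Rq F) (Θ a) + algebraMap F (Rq F) (Θ b) * vR F +
          algebraMap F (Rq F) (Θ c) * vR F ^ 2)
    (lam : Fin 3 → F) (δ : Rq F)
    (hδ : δ = ∑ i, algebraMap F (Rq F) (lam i) * eta F i)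
    (hδu : IsUnit δ) (hfix : σ δ = δ) (hord : orderOf σ ∣ n)
    (f : Fin 3 → (ℕ →₀ F)) (hmon : ∀ i, IsMonicPoly (f i))
    (hdiv : ∀ i, ∃ h, skewMul Θ h (f i) =
        Finsupp.single n 1 - Finsupp.single 0 (lam i))
    (A : Fin 3 → Submodule F (Fin n → F))
    (hA : ∀ i, ∀ c : Fin n → F, c ∈ A i ↔ ∃ q, toPoly c = skewMul Θ q (f i))
    (C : Submodule (Rq F) (Fin n → Rq F))
    (hC : ∀ c, c ∈ C ↔ ∃ y : Fin 3 → Fin n → F, (∀ i, y i ∈ A i) ∧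
        c = fun t => ∑ j, eta F j * algebraMap F (Rq F) (y j t))
    (hconst : IsSkewConstacyclic σ δ (C : Set (Fin n → Rq F))) :
    (∀ c : Fin n → Rq F, c ∈ C ↔
        ∃ q : ℕ →₀ Rq F, toPoly c = skewMul σ q (∑ i, eta F i • liftPoly F (f i))) ∧
      ∃ h : ℕ →₀ Rq F, skewMul σ h (∑ i, eta F i • liftPoly F (f i)) =
        Finsupp.single n 1 - Finsupp.single 0 δ :=
  stmt12_general p m n hodd F hF Θ σ hσ lam δ hδ f hdiv A hA C hC
end
end
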